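/- arXiv:2508.13879 — 2 statements merged into one kernel-verified Lean document; each statement's English description precedes it below -/
import Mathlib

section
/- For all real x and y with x + iy ≠ 0, one has |sinc(x+iy)| ≤ e^{π|y|}|sinc(x)| + |e^{π|y|} − 1|/(π|y|) when y ≠ 0, where sinc(z) = sin(πz)/(πz). -/
open Complex Real

/-- The entire extension of the sinc function, `sinc z = sin (π z) / (π z)`. -/
noncomputable def csinc (z : ℂ) : ℂ :=
  if z = 0 then 1 else Complex.sin (Real.pi * z) / (Real.pi * z)

/-- The real sinc function (with `sinc 0 = 1`). -/
noncomputable def rsinc (x : ℝ) : ℝ :=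
  if x = 0 then 1 else Real.sin (Real.pi * x) / (Real.pi * x)

/-!
Writing `z = x + iy`, `sin (π z) = sin (π x) cosh (π y) + i cos (π x) sinh (π y)`. Since
`cosh t ≤ e^|t|` and `|sinh t| ≤ e^|t| - 1`, and `sin (π x) = π x sinc x`, this gives
`|sin (π z)| ≤ π |x| |sinc x| e^{π|y|} + (e^{π|y|} - 1)`; dividing by `π |z|` and using
`|x|, |y| ≤ |z|` yields the bound.
-/

lemma Real.cosh_le_exp_abs (t : ℝ) : Real.cosh t ≤ Real.exp |t| := by
  rw [← Real.cosh_abs, Real.cosh_eq]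
  have : Real.exp (-|t|) ≤ Real.exp |t| := Real.exp_le_exp.2 (by linarith [abs_nonneg t])
  linarith

lemma Real.abs_sinh_le_exp_abs_sub_one (t : ℝ) : |Real.sinh t| ≤ Real.exp |t| - 1 := by
  rw [Real.abs_sinh, ← Real.cosh_add_sinh |t|]
  linarith [Real.one_le_cosh |t|]

lemma Complex.norm_sin_add_mul_I_le (x y : ℝ) :
    ‖Complex.sin (x + y * I)‖ ≤ |Real.sin x| * Real.exp |y| + (Real.exp |y| - 1) := by
  rw [Complex.sin_add_mul_I, ← ofReal_sin, ← ofReal_cos, ← ofReal_cosh, ← ofReal_sinh]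
  refine (norm_add_le _ _).trans (add_le_add ?_ ?_)
  · rw [norm_mul, norm_real, norm_real, Real.norm_eq_abs, Real.norm_eq_abs,
      abs_of_pos (Real.cosh_pos y)]
    exact mul_le_mul_of_nonneg_left (Real.cosh_le_exp_abs y) (abs_nonneg _)
  · rw [norm_mul, norm_I, mul_one, norm_mul, norm_real, norm_real, Real.norm_eq_abs,
      Real.norm_eq_abs]
    calc |Real.cos x| * |Real.sinh y| ≤ 1 * |Real.sinh y| := by
          gcongr; exact Real.abs_cos_le_one x
      _ ≤ Real.exp |y| - 1 := by rw [one_mul]; exact Real.abs_sinh_le_exp_abs_sub_one y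

lemma sin_pi_mul_eq_mul_rsinc (x : ℝ) : Real.sin (π * x) = π * x * rsinc x := by
  rcases eq_or_ne x 0 with rfl | hx
  · simp
  · rw [rsinc, if_neg hx, mul_div_cancel₀ _ (mul_ne_zero Real.pi_ne_zero hx)]

lemma csin_pi_mul_eq_mul_csinc (z : ℂ) :
    Complex.sin (π * z) = π * z * csinc z := by
  rcases eq_or_ne z 0 with rfl | hz
  · simp
  · rw [csinc, if_neg hz, mul_div_cancel₀ _ (mul_ne_zero (ofReal_ne_zero.2 Real.pi_ne_zero) hz)]

lemma norm_sin_pi_mul_add_mul_I_le (x y : ℝ) :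
    ‖Complex.sin (π * (x + y * I))‖ ≤ π * |x| * |rsinc x| * Real.exp (π * |y|) +
      (Real.exp (π * |y|) - 1) := by
  have hz : (π : ℂ) * (x + y * I) = (π * x : ℝ) + (π * y : ℝ) * I := by push_cast; ring
  have h := Complex.norm_sin_add_mul_I_le (π * x) (π * y)
  rwa [sin_pi_mul_eq_mul_rsinc, abs_mul, abs_mul, abs_of_pos Real.pi_pos, abs_mul π y,
    abs_of_pos Real.pi_pos, ← hz] at h

theorem csinc_bound_split (x y : ℝ) (hy : y ≠ 0) :
    ‖csinc (x + y * Complex.I)‖ ≤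
      Real.exp (Real.pi * |y|) * |rsinc x| +
        |Real.exp (Real.pi * |y|) - 1| / (Real.pi * |y|) := by
  set z : ℂ := x + y * I
  set a := π * |y|
  have ha : 0 < a := mul_pos Real.pi_pos (abs_pos.2 hy)
  have hexp : 0 ≤ Real.exp a - 1 := by linarith [Real.add_one_le_exp a]
  have hx_le : |x| ≤ ‖z‖ := by simpa [z] using Complex.abs_re_le_norm z
  have ha_le : a ≤ π * ‖z‖ :=
    mul_le_mul_of_nonneg_left (by simpa [z] using Complex.abs_im_le_norm z) Real.pi_pos.le
  refine le_of_mul_le_mul_left ?_ (ha.trans_le ha_le)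
  rw [abs_of_nonneg hexp]
  calc π * ‖z‖ * ‖csinc z‖ = ‖Complex.sin (π * z)‖ := by
        rw [csin_pi_mul_eq_mul_csinc, norm_mul, norm_mul, norm_real,
          Real.norm_of_nonneg Real.pi_pos.le]
    _ ≤ π * |x| * |rsinc x| * Real.exp a + (Real.exp a - 1) := norm_sin_pi_mul_add_mul_I_le x y
    _ ≤ π * ‖z‖ * |rsinc x| * Real.exp a + π * ‖z‖ * ((Real.exp a - 1) / a) := by
      gcongr
      calc Real.exp a - 1 = a * ((Real.exp a - 1) / a) := (mul_div_cancel₀ _ ha.ne').symm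
        _ ≤ π * ‖z‖ * ((Real.exp a - 1) / a) := by gcongr
    _ = π * ‖z‖ * (Real.exp a * |rsinc x| + (Real.exp a - 1) / a) := by ring
end

section
/- The family of integer-shifted sinc functions is L²-orthogonal: for all distinct integers j, k, the integral over ℝ of sinc(s − j)·sinc(s − k) ds equals 0, where sinc(s) = sin(πs)/(πs) with sinc(0)=1. -/
/-!
The identity `π x · rsinc x = sin (π x)` gives, for `u, v` with `v - u = n ∈ ℤ`, the partial
fraction decomposition `π n · rsinc u · rsinc v = (-1)ⁿ (h u - h v)` with `h x = sin (π x) · rsinc x`.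
Integrated over `[-R, R]`, the two shifted integrals of `h` differ only by two windows of fixed
length near `±R`, and these vanish as `R → ∞` because `h` decays. Since `rsinc ∈ L²`, the product
is integrable, so its symmetric integrals converge to the full integral, which is therefore `0`.
-/

open MeasureTheory Real

open Filter Topology Bornology
open scoped Interval

section WindowIntegrals

variable {E : Type*} [NormedAddCommGroup E] [NormedSpace ℝ E] {g : ℝ → E}

theorem tendsto_intervalIntegral_sub_cobounded (hg : Tendsto g (cobounded ℝ) (𝓝 0)) (a b : ℝ) :
    Tendsto (fun x => ∫ t in (x - a)..(x - b), g t) (cobounded ℝ) (𝓝 0) := by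
  rw [Metric.tendsto_nhds]
  intro ε hε
  set δ := ε / (|a - b| + 1)
  obtain ⟨r, -, hr⟩ :=
    (hasBasis_cobounded_norm.tendsto_iff Metric.nhds_basis_closedBall).1 hg δ (by positivity)
  filter_upwards [eventually_cobounded_le_norm (r + |a| + |b|)] with x hx
  have hwindow : ∀ t ∈ Ι (x - a) (x - b), ‖g t‖ ≤ δ := by
    intro t ht
    have hdist : |t - x| ≤ |a| + |b| := by
      rw [abs_le]
      rcases Set.mem_uIcc.1 (Set.uIoc_subset_uIcc ht) with h | h <;> constructor <;>
        linarith [le_abs_self a, le_abs_self b, neg_abs_le a, neg_abs_le b]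
    have hrt : r ≤ ‖t‖ := by
      have := abs_sub_abs_le_abs_sub x t
      rw [Real.norm_eq_abs] at hx ⊢
      linarith [abs_sub_comm t x]
    simpa using hr t hrt
  calc dist (∫ t in (x - a)..(x - b), g t) 0
      ≤ δ * |(x - b) - (x - a)| := by
        rw [dist_zero_right]; exact intervalIntegral.norm_integral_le_of_norm_le_const hwindow
    _ = ε * (|a - b| / (|a - b| + 1)) := by
        rw [show (x - b) - (x - a) = a - b by ring]; ring
    _ < ε := mul_lt_of_lt_one_right hε ((div_lt_one (by positivity)).2 (lt_add_one _))

theorem tendsto_intervalIntegral_comp_sub_sub_comp_sub (hg : Tendsto g (cobounded ℝ) (𝓝 0))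
    (hgc : Continuous g) (a b : ℝ) :
    Tendsto (fun R => ∫ s in (-R)..R, (g (s - a) - g (s - b))) atTop (𝓝 0) := by
  have hsplit : ∀ R : ℝ, ∫ s in (-R)..R, (g (s - a) - g (s - b)) =
      (∫ t in (-R - a)..(-R - b), g t) - ∫ t in (R - a)..(R - b), g t := fun R => by
    have hshift (c : ℝ) : Continuous fun s => g (s - c) := hgc.comp (continuous_sub_right c)
    rw [intervalIntegral.integral_sub ((hshift a).intervalIntegrable _ _)
        ((hshift b).intervalIntegrable _ _),
      intervalIntegral.integral_comp_sub_right g a, intervalIntegral.integral_comp_sub_right g b,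
      intervalIntegral.integral_interval_sub_interval_comm (hgc.intervalIntegrable _ _)
        (hgc.intervalIntegrable _ _) (hgc.intervalIntegrable _ _)]
  have hW := tendsto_intervalIntegral_sub_cobounded hg a b
  simp_rw [hsplit]
  simpa using
    (hW.comp (tendsto_neg_atTop_atBot.mono_right IsOrderBornology.atBot_le_cobounded)).sub
      (hW.comp IsOrderBornology.atTop_le_cobounded)

end WindowIntegrals

theorem rsinc_eq_sinc (x : ℝ) : rsinc x = sinc (π * x) := by
  simp [rsinc, sinc_apply, pi_ne_zero]

theorem continuous_rsinc : Continuous rsinc := by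
  simp_rw [funext rsinc_eq_sinc]
  fun_prop

theorem pi_mul_mul_rsinc (x : ℝ) : π * x * rsinc x = sin (π * x) := by
  rw [rsinc]
  split_ifs with hx
  · simp [hx]
  · field_simp [pi_ne_zero]

theorem rsinc_sq_mul_one_add_sq_le (x : ℝ) : rsinc x ^ 2 * (1 + x ^ 2) ≤ 2 := by
  have h₁ : rsinc x ^ 2 ≤ 1 := by
    rw [rsinc_eq_sinc, sq_le_one_iff_abs_le_one]; exact abs_sinc_le_one _
  have h₂ : (π * x * rsinc x) ^ 2 ≤ 1 := by rw [pi_mul_mul_rsinc]; exact sin_sq_le_one _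
  have hπ : 1 ≤ π ^ 2 := one_le_pow₀ (by linarith [pi_gt_three])
  nlinarith [sq_nonneg (x * rsinc x)]

theorem memLp_two_rsinc : MemLp rsinc 2 := by
  rw [memLp_two_iff_integrable_sq continuous_rsinc.aestronglyMeasurable]
  refine (integrable_inv_one_add_sq.const_mul 2).mono'
    (continuous_rsinc.pow 2).aestronglyMeasurable (Eventually.of_forall fun x => ?_)
  rw [Real.norm_eq_abs, abs_sq, ← div_eq_mul_inv, le_div_iff₀ (by positivity)]
  exact rsinc_sq_mul_one_add_sq_le x

theorem integrable_rsinc_sub_mul_rsinc_sub (a b : ℝ) :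
    Integrable fun s => rsinc (s - a) * rsinc (s - b) :=
  (memLp_two_rsinc.comp_measurePreserving (measurePreserving_sub_right volume a)).integrable_mul
    (memLp_two_rsinc.comp_measurePreserving (measurePreserving_sub_right volume b))

theorem tendsto_rsinc_cobounded : Tendsto rsinc (cobounded ℝ) (𝓝 0) := by
  refine squeeze_zero_norm' ?_ (tendsto_inv_atTop_zero.comp
    (tendsto_norm_cobounded_atTop.const_mul_atTop pi_pos))
  filter_upwards [eventually_ne_cobounded 0] with x hx
  have hπx : 0 < π * ‖x‖ := mul_pos pi_pos (norm_pos_iff.2 hx)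
  have hsin := abs_sin_le_one (π * x)
  rw [← pi_mul_mul_rsinc, abs_mul, abs_mul, abs_of_pos pi_pos] at hsin
  rw [Function.comp_apply, ← one_div, le_div_iff₀ hπx, Real.norm_eq_abs, Real.norm_eq_abs]
  linarith

theorem tendsto_sin_mul_rsinc_cobounded :
    Tendsto (fun x => sin (π * x) * rsinc x) (cobounded ℝ) (𝓝 0) :=
  isBoundedUnder_le_mul_tendsto_zero (isBoundedUnder_of ⟨1, fun x => abs_sin_le_one (π * x)⟩)
    tendsto_rsinc_cobounded

theorem pi_mul_sub_mul_rsinc_mul_rsinc (u v : ℝ) :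
    π * (v - u) * (rsinc u * rsinc v) = sin (π * v) * rsinc u - sin (π * u) * rsinc v := by
  rw [← pi_mul_mul_rsinc u, ← pi_mul_mul_rsinc v]; ring

theorem pi_mul_sub_mul_rsinc_sub_mul_rsinc_sub (j k : ℤ) (s : ℝ) :
    π * (j - k) * (rsinc (s - j) * rsinc (s - k)) =
      (-1) ^ (j - k) * (sin (π * (s - j)) * rsinc (s - j) - sin (π * (s - k)) * rsinc (s - k)) := by
  have hk : sin (π * (s - k)) = (-1) ^ (j - k) * sin (π * (s - j)) := by
    rw [← sin_add_int_mul_pi]; push_cast; ring_nf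
  have hj : sin (π * (s - j)) = (-1) ^ (j - k) * sin (π * (s - k)) := by
    rw [← sin_sub_int_mul_pi]; push_cast; ring_nf
  have h := pi_mul_sub_mul_rsinc_mul_rsinc (s - j) (s - k)
  rw [show s - k - (s - j) = (j : ℝ) - k by ring] at h
  linear_combination h + rsinc (s - j) * hk - rsinc (s - k) * hj

theorem sinc_shifts_orthogonal (j k : ℤ) (hjk : j ≠ k) :
    ∫ s : ℝ, rsinc (s - j) * rsinc (s - k) = 0 := by
  have hc : π * ((j : ℝ) - k) ≠ 0 := mul_ne_zero pi_ne_zero (sub_ne_zero.2 (mod_cast hjk))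
  have hlim := (intervalIntegral_tendsto_integral (integrable_rsinc_sub_mul_rsinc_sub j k)
    tendsto_neg_atTop_atBot tendsto_id).const_mul (π * (j - k))
  have hzero : Tendsto (fun R => π * (j - k) * ∫ s in (-R)..R, rsinc (s - j) * rsinc (s - k))
      atTop (𝓝 0) := by
    simp_rw [← intervalIntegral.integral_const_mul, pi_mul_sub_mul_rsinc_sub_mul_rsinc_sub,
      intervalIntegral.integral_const_mul]
    simpa using (tendsto_intervalIntegral_comp_sub_sub_comp_sub
      tendsto_sin_mul_rsinc_cobounded
      ((continuous_sin.comp (continuous_const.mul continuous_id)).mul continuous_rsinc)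
      j k).const_mul ((-1) ^ (j - k))
  exact (mul_eq_zero.1 (tendsto_nhds_unique hlim hzero)).resolve_left hc
end
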